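/- arXiv:1610.01902 — 2 statements merged into one kernel-verified Lean document; each statement's English description precedes it below -/
import Mathlib

section
/- Let X be a set and R : X → Set(Y) with R(x) ≠ ∅ for all x. Define d(x,y)=0 if x=y or (R(x)=R(y) and R(x) is a singleton); d(x,y)=1 if (R(x) is a singleton and R(x) ⊆ R(y)) or (R(y) is a singleton and R(y) ⊆ R(x)); and d(x,y)=2 otherwise. Then d is a pseudometric: d(x,x)=0, d is symmetric, and d satisfies the triangle inequality. -/
open Classical in
/-- The variant Campbell–Nitzan distance is a pseudometric. -/
theorem stmt1 {X Y : Type*} (R : X → Set Y) (hR : ∀ x, (R x).Nonempty)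
    (d : X → X → ℝ)
    (hd : ∀ x y, d x y =
      if x = y ∨ (R x = R y ∧ ∃ a, R x = {a}) then 0
      else if ((∃ a, R x = {a}) ∧ R x ⊆ R y) ∨ ((∃ a, R y = {a}) ∧ R y ⊆ R x) then 1
      else 2) :
    (∀ x, d x x = 0) ∧ (∀ x y, d x y = d y x) ∧
      (∀ x y z, d x z ≤ d x y + d y z) := by
  have hval : ∀ x y, d x y = 0 ∨ d x y = 1 ∨ d x y = 2 := by
    intro x y; rw [hd]; split_ifs <;> simp
  have hzero : ∀ x y, d x y = 0 ↔ (x = y ∨ (R x = R y ∧ ∃ a, R x = {a})) := by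
    intro x y; rw [hd]; split_ifs with h1 h2 <;> simp [h1]
  have hle1 : ∀ x y, d x y ≤ 1 ↔
      ((x = y ∨ (R x = R y ∧ ∃ a, R x = {a})) ∨
        (((∃ a, R x = {a}) ∧ R x ⊆ R y) ∨ ((∃ a, R y = {a}) ∧ R y ⊆ R x))) := by
    intro x y; rw [hd]; split_ifs <;> simp [*] <;> norm_num
  have hle2 : ∀ x y, d x y ≤ 2 := by
    intro x y; rw [hd]; split_ifs <;> norm_num
  have hnn : ∀ x y, 0 ≤ d x y := by
    intro x y; rw [hd]; split_ifs <;> norm_num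
  have hsymm : ∀ x y, d x y = d y x := by
    intro x y
    rw [hd x y, hd y x]
    have h1 : (x = y ∨ (R x = R y ∧ ∃ a, R x = {a})) ↔
        (y = x ∨ (R y = R x ∧ ∃ a, R y = {a})) := by
      constructor <;> rintro (rfl | ⟨h, a, ha⟩)
      · exact Or.inl rfl
      · exact Or.inr ⟨h.symm, a, h ▸ ha⟩
      · exact Or.inl rfl
      · exact Or.inr ⟨h.symm, a, h ▸ ha⟩
    rw [if_congr h1 rfl (if_congr or_comm rfl rfl)]
  have Hle1 : ∀ x y z, d x y = 0 → d y z ≤ 1 → d x z ≤ 1 := by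
    intro x y z h0 h1
    rw [hzero] at h0
    rcases h0 with rfl | ⟨hRxy, hs⟩
    · exact h1
    · rw [hle1] at h1 ⊢
      rcases h1 with (rfl | ⟨h, hs'⟩) | (⟨hsy, hsub⟩ | ⟨hsz, hsub⟩)
      · exact Or.inl (Or.inr ⟨hRxy, hs⟩)
      · exact Or.inl (Or.inr ⟨hRxy.trans h, hs⟩)
      · refine Or.inr (Or.inl ⟨hs, ?_⟩); rw [hRxy]; exact hsub
      · refine Or.inr (Or.inr ⟨hsz, ?_⟩); rw [hRxy]; exact hsub
  have H0 : ∀ x y z, d x y = 0 → d y z = 0 → d x z = 0 := by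
    intro x y z h0 h1
    rw [hzero] at h0 h1 ⊢
    rcases h0 with rfl | ⟨hRxy, hs⟩
    · exact h1
    · rcases h1 with rfl | ⟨hRyz, hs'⟩
      · exact Or.inr ⟨hRxy, hs⟩
      · exact Or.inr ⟨hRxy.trans hRyz, hs⟩
  refine ⟨fun x => by rw [hd]; simp, hsymm, fun x y z => ?_⟩
  rcases hval x y with h1 | h1 | h1 <;> rcases hval y z with h2 | h2 | h2
  · have := H0 x y z h1 h2; linarith
  · have := Hle1 x y z h1 (le_of_eq h2); linarith
  · have := hle2 x z; linarith
  · have : d x z ≤ 1 := by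
      rw [hsymm x z]
      exact Hle1 z y x (by rw [hsymm z y]; exact h2) (by rw [hsymm y x]; exact le_of_eq h1)
    linarith
  · have := hle2 x z; linarith
  · have := hle2 x z; linarith
  · have := hle2 x z; linarith
  · have := hle2 x z; linarith
  · have := hle2 x z; linarith
end

section
/- In Fishburn's example with candidates C = {a₁,…,a₇,x} and the 7-voter profile whose i-th vote is the i-th cyclic shift of a₁a₂…a₇ with x inserted in 5th position, the minimum number of adjacent swaps needed to make x a Condorcet winner is 7, while for each i the minimum number of adjacent swaps needed to make a_i a Condorcet winner is 6. -/
/-! The Dodgson score of `c` is bounded below by its Condorcet deficit: the number of votes `c`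
lacks against each opponent to beat it by a strict majority, summed over all opponents. An
adjacent swap reverses the order of a single pair of candidates in a single vote, so it lowers
the deficit by at most one. In Fishburn's profile `x` is ranked above each `a_i` in only three
votes, so its deficit is 7, while each `a_i` has deficit 6; explicit sequences of 7 and 6 swaps
attain these bounds. -/

/-- Candidate set: `0,…,6` are `a₁,…,a₇` and `7` is `x`. The `i`-th vote (for `i : Fin 7`)
as a map from positions to candidates: positions `0..3` hold `a_{i+1},…,a_{i+4}` (indices
cyclic mod 7), position `4` holds `x`, and positions `5..7` hold `a_{i+5},a_{i+6},a_{i+7}`. -/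
def fishburnFun (i : Fin 7) : Fin 8 → Fin 8 := fun j =>
  if j.val < 4 then ⟨(i.val + j.val) % 7, by omega⟩
  else if j.val = 4 then ⟨7, by omega⟩
  else ⟨(i.val + j.val - 1) % 7, by omega⟩

lemma fishburnFun_bijective : ∀ i, Function.Bijective (fishburnFun i) := by decide

/-- The Fishburn profile: 7 voters, the `i`-th vote being the `i`-th cyclic shift of
`a₁a₂…a₇` with `x` inserted in 5th position. -/
noncomputable def fishburnProfile : Fin 7 → Equiv.Perm (Fin 8) := fun i =>
  Equiv.ofBijective (fishburnFun i) (fishburnFun_bijective i)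

/-- One adjacent swap: one voter exchanges the candidates in two neighboring positions. -/
def AdjSwap (π π' : Fin 7 → Equiv.Perm (Fin 8)) : Prop :=
  ∃ (v : Fin 7) (j : Fin 7),
    π' v = π v * Equiv.swap j.castSucc j.succ ∧ ∀ u, u ≠ v → π' u = π u

/-- `c` is a Condorcet winner: for each other candidate, strictly more than half of the
7 voters rank `c` above it (smaller position means ranked higher). -/
def IsCondorcetWinner (π : Fin 7 → Equiv.Perm (Fin 8)) (c : Fin 8) : Prop :=
  ∀ c', c' ≠ c →
    7 < 2 * (Finset.univ.filter fun v : Fin 7 => ((π v)⁻¹ c : Fin 8) < (π v)⁻¹ c').card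

/-- The Dodgson score of `c`: the minimal number of adjacent swaps needed to make `c`
a Condorcet winner. -/
noncomputable def dodgsonScore (π : Fin 7 → Equiv.Perm (Fin 8)) (c : Fin 8) : ℕ :=
  sInf {k : ℕ | ∃ p : ℕ → (Fin 7 → Equiv.Perm (Fin 8)), p 0 = π ∧
    (∀ i < k, AdjSwap (p i) (p (i + 1))) ∧ IsCondorcetWinner (p k) c}

open Finset

abbrev Profile := Fin 7 → Equiv.Perm (Fin 8)

def fishburnRank (v : Fin 7) (c : Fin 8) : Fin 8 :=
  if h : c = Fin.last 7 then 4
  else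
    let d : Fin 7 := c.castPred h - v
    if d.val < 4 then d.castSucc else d.succ

lemma fishburnRank_fishburnFun : ∀ v j, fishburnRank v (fishburnFun v j) = j := by decide

lemma fishburnFun_fishburnRank : ∀ v c, fishburnFun v (fishburnRank v c) = c := by decide

-- `Equiv.ofBijective` has no computable inverse; this copy of the profile lets `decide` run.
def fishburnVote (v : Fin 7) : Equiv.Perm (Fin 8) where
  toFun := fishburnFun v
  invFun := fishburnRank v
  left_inv := fishburnRank_fishburnFun v
  right_inv := fishburnFun_fishburnRank v

lemma fishburnProfile_eq_fishburnVote : fishburnProfile = fishburnVote :=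
  funext fun _ => Equiv.ext fun _ => rfl

theorem Fin.swap_castSucc_succ_lt_iff {n : ℕ} (j : Fin n) {p q : Fin (n + 1)}
    (h : ¬(p = j.castSucc ∧ q = j.succ)) (h' : ¬(p = j.succ ∧ q = j.castSucc)) :
    Equiv.swap j.castSucc j.succ p < Equiv.swap j.castSucc j.succ q ↔ p < q := by
  simp only [Fin.ext_iff, Fin.val_castSucc, Fin.val_succ] at h h'
  simp only [Equiv.swap_apply_def]
  split_ifs <;> simp only [Fin.lt_def, Fin.ext_iff, Fin.val_castSucc, Fin.val_succ] at * <;> omega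

def supportCount (π : Profile) (c c' : Fin 8) : ℕ := #{v | (π v)⁻¹ c < (π v)⁻¹ c'}

-- Four of the seven votes are a strict majority; thanks to truncated subtraction each summand
-- is the number of votes `c` still lacks against `c'`.
def condorcetDeficit (π : Profile) (c : Fin 8) : ℕ :=
  ∑ c' ∈ univ.erase c, (4 - supportCount π c c')

lemma condorcetDeficit_eq_zero {π : Profile} {c : Fin 8} (h : IsCondorcetWinner π c) :
    condorcetDeficit π c = 0 :=
  sum_eq_zero fun c' hc' => by
    have := h c' (ne_of_mem_erase hc')
    unfold supportCount
    omega

lemma supportCount_le_of_adjSwap {π π' : Profile} (h : AdjSwap π π') (c c' : Fin 8) :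
    supportCount π' c c' ≤ supportCount π c c' + 1 := by
  obtain ⟨v, -, -, hu⟩ := h
  calc supportCount π' c c' ≤ #(insert v ({u | (π u)⁻¹ c < (π u)⁻¹ c'} : Finset (Fin 7))) := by
        refine card_le_card fun u hu' => ?_
        by_cases huv : u = v
        · exact mem_insert.2 (Or.inl huv)
        · simpa [hu u huv, huv] using hu'
    _ ≤ supportCount π c c' + 1 := card_insert_le _ _

lemma supportCount_eq_of_adjSwap {π π' : Profile} (h : AdjSwap π π') (c : Fin 8) :
    ∃ c₀, ∀ c' ≠ c₀, supportCount π' c c' = supportCount π c c' := by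
  obtain ⟨v, j, hv, hu⟩ := h
  refine ⟨if c = π v j.castSucc then π v j.succ else if c = π v j.succ then π v j.castSucc else c,
    fun c' hc' => ?_⟩
  unfold supportCount
  congr 1
  refine filter_congr fun u _ => ?_
  by_cases huv : u = v
  · subst huv
    rw [hv, mul_inv_rev, Equiv.swap_inv, Equiv.Perm.mul_apply, Equiv.Perm.mul_apply]
    apply Fin.swap_castSucc_succ_lt_iff <;>
    · rintro ⟨hc, hc''⟩
      rw [Equiv.Perm.inv_eq_iff_eq] at hc hc''
      subst hc hc''
      have := (Fin.castSucc_lt_succ (i := j)).ne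
      split_ifs at hc' <;> simp_all
  · rw [hu u huv]

theorem Finset.sum_le_sum_add_of_le_of_ne {ι M : Type*} [AddCommMonoid M] [PartialOrder M]
    [IsOrderedAddMonoid M] {s : Finset ι} {f g : ι → M} (a : ι) {k : M} (hk : 0 ≤ k)
    (hne : ∀ i ≠ a, f i ≤ g i) (ha : f a ≤ g a + k) : ∑ i ∈ s, f i ≤ ∑ i ∈ s, g i + k := by
  classical
  calc ∑ i ∈ s, f i ≤ ∑ i ∈ s, (g i + if i = a then k else 0) := by
        refine sum_le_sum fun i _ => ?_
        by_cases hi : i = a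
        · simpa [hi] using ha
        · simpa [hi] using hne i hi
    _ = ∑ i ∈ s, g i + if a ∈ s then k else 0 := by rw [sum_add_distrib, sum_ite_eq']
    _ ≤ ∑ i ∈ s, g i + k := by
        gcongr
        split_ifs <;> simp [hk]

lemma condorcetDeficit_le_of_adjSwap {π π' : Profile} (h : AdjSwap π π') (c : Fin 8) :
    condorcetDeficit π c ≤ condorcetDeficit π' c + 1 := by
  obtain ⟨c₀, hc₀⟩ := supportCount_eq_of_adjSwap h c
  refine sum_le_sum_add_of_le_of_ne c₀ zero_le_one (fun c' hc' => by rw [hc₀ c' hc']) ?_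
  have := supportCount_le_of_adjSwap h c c₀
  omega

lemma condorcetDeficit_le_add_of_adjSwap_chain (c : Fin 8) {p : ℕ → Profile} {k : ℕ}
    (hp : ∀ i < k, AdjSwap (p i) (p (i + 1))) :
    condorcetDeficit (p 0) c ≤ condorcetDeficit (p k) c + k := by
  induction k with
  | zero => simp
  | succ n ih =>
    have := condorcetDeficit_le_of_adjSwap (hp n n.lt_succ_self) c
    have := ih fun i hi => hp i (hi.trans n.lt_succ_self)
    omega

lemma condorcetDeficit_le_of_mem {π : Profile} {c : Fin 8} {k : ℕ}
    (hk : k ∈ {k : ℕ | ∃ p : ℕ → Profile, p 0 = π ∧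
      (∀ i < k, AdjSwap (p i) (p (i + 1))) ∧ IsCondorcetWinner (p k) c}) :
    condorcetDeficit π c ≤ k := by
  obtain ⟨p, rfl, hp, hcw⟩ := hk
  simpa [condorcetDeficit_eq_zero hcw] using condorcetDeficit_le_add_of_adjSwap_chain c hp

def swapAt (π : Profile) (s : Fin 7 × Fin 7) : Profile :=
  Function.update π s.1 (π s.1 * Equiv.swap s.2.castSucc s.2.succ)

lemma adjSwap_swapAt (π : Profile) (s : Fin 7 × Fin 7) : AdjSwap π (swapAt π s) :=
  ⟨s.1, s.2, by simp [swapAt], fun _ hu => Function.update_of_ne hu _ _⟩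

def swapPath (π : Profile) (l : List (Fin 7 × Fin 7)) (k : ℕ) : Profile :=
  (l.take k).foldl swapAt π

lemma adjSwap_swapPath (π : Profile) (l : List (Fin 7 × Fin 7)) {k : ℕ} (hk : k < l.length) :
    AdjSwap (swapPath π l k) (swapPath π l (k + 1)) := by
  rw [swapPath, swapPath, List.take_add_one, List.getElem?_eq_getElem hk, Option.toList_some,
    List.foldl_append, List.foldl_cons, List.foldl_nil]
  exact adjSwap_swapAt _ _

lemma dodgsonScore_eq_of_swapPath {π : Profile} {c : Fin 8} (l : List (Fin 7 × Fin 7))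
    (hcw : IsCondorcetWinner (swapPath π l l.length) c)
    (hdef : l.length ≤ condorcetDeficit π c) :
    dodgsonScore π c = l.length := by
  have hmem : l.length ∈ {k : ℕ | ∃ p : ℕ → Profile, p 0 = π ∧
      (∀ i < k, AdjSwap (p i) (p (i + 1))) ∧ IsCondorcetWinner (p k) c} :=
    ⟨swapPath π l, rfl, fun _ => adjSwap_swapPath π l, hcw⟩
  exact le_antisymm (Nat.sInf_le hmem)
    (le_csInf ⟨_, hmem⟩ fun _ hk => hdef.trans (condorcetDeficit_le_of_mem hk))

-- Raise `x` one place, over the fourth-ranked candidate, in every vote.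
def xSwaps : List (Fin 7 × Fin 7) := (List.finRange 7).map (·, 3)

-- Raise `a_m` to the top of the votes `m - 3`, `m - 2`, `m - 1`, where it stands fourth, third
-- and second; together with vote `m` it then heads four of the seven votes.
def aSwaps (m : Fin 7) : List (Fin 7 × Fin 7) :=
  [(m + 4, 2), (m + 4, 1), (m + 4, 0), (m + 5, 1), (m + 5, 0), (m + 6, 0)]

lemma condorcetDeficit_fishburnVote_x : condorcetDeficit fishburnVote 7 = 7 := by
  decide

lemma condorcetDeficit_fishburnVote_a :
    ∀ m : Fin 7, condorcetDeficit fishburnVote m.castSucc = 6 := by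
  decide

lemma isCondorcetWinner_swapPath_xSwaps :
    IsCondorcetWinner (swapPath fishburnVote xSwaps 7) 7 := by
  unfold IsCondorcetWinner
  decide

lemma isCondorcetWinner_swapPath_aSwaps :
    ∀ m : Fin 7, IsCondorcetWinner (swapPath fishburnVote (aSwaps m) 6) m.castSucc := by
  unfold IsCondorcetWinner
  decide

/-- In Fishburn's example, making `x` a Condorcet winner needs 7 adjacent swaps, while
each `a_i` needs only 6. -/
theorem stmt19 :
    dodgsonScore fishburnProfile 7 = 7 ∧
    ∀ i : Fin 7, dodgsonScore fishburnProfile i.castSucc = 6 := by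
  rw [fishburnProfile_eq_fishburnVote]
  refine ⟨?_, fun i => ?_⟩
  · exact dodgsonScore_eq_of_swapPath xSwaps isCondorcetWinner_swapPath_xSwaps
      condorcetDeficit_fishburnVote_x.ge
  · exact dodgsonScore_eq_of_swapPath (aSwaps i) (isCondorcetWinner_swapPath_aSwaps i)
      (condorcetDeficit_fishburnVote_a i).ge
end
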